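/- In the free group F_5, the four commutators [λ_{3,5},λ_{2,1}], [λ_{4,5},λ_{2,1}], [λ_{4,5},λ_{3,1}], [λ_{4,5},λ_{3,2}] all lie in the normal closure of the set {S_i(λ_{3,4}λ_{2,1}λ_{3,4}^{-1}λ_{2,1}^{-1}) : i = 0,1,2,3} ∪ CR(4), where S_i : F_4 → F_5 and CR(4) ⊆ F_5 via the canonical inclusion F_4 → F_5. -/

import Mathlib

/-- The ambient free group with generators `λ i j` indexed by ordered pairs of naturals;
the sub-free-group `F_m` is spanned by the generators `lam i j` with `1 ≤ i ≠ j ≤ m`,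
and the canonical inclusion `F_m → F_{m'}` is the identity on generators. -/
abbrev FG : Type := FreeGroup (ℕ × ℕ)

/-- The generator `λ_{i,j}`. -/
def lam (i j : ℕ) : FG := FreeGroup.of (i, j)

/-- The commutativity relators `λ_{i,j} λ_{k,l} λ_{i,j}⁻¹ λ_{k,l}⁻¹` of `VP_m`,
for pairwise distinct indices `1 ≤ i, j, k, l ≤ m`. -/
def CR (m : ℕ) : Set FG :=
  {w | ∃ i j k l : ℕ,
    1 ≤ i ∧ i ≤ m ∧ 1 ≤ j ∧ j ≤ m ∧ 1 ≤ k ∧ k ≤ m ∧ 1 ≤ l ∧ l ≤ m ∧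
    i ≠ j ∧ i ≠ k ∧ i ≠ l ∧ j ≠ k ∧ j ≠ l ∧ k ≠ l ∧
    w = lam i j * lam k l * (lam i j)⁻¹ * (lam k l)⁻¹}

/-- The long relators `λ_{k,i} λ_{k,j} λ_{i,j} λ_{k,i}⁻¹ λ_{k,j}⁻¹ λ_{i,j}⁻¹` of `VP_m`,
for pairwise distinct indices `1 ≤ i, j, k ≤ m`. -/
def LongR (m : ℕ) : Set FG :=
  {w | ∃ i j k : ℕ,
    1 ≤ i ∧ i ≤ m ∧ 1 ≤ j ∧ j ≤ m ∧ 1 ≤ k ∧ k ≤ m ∧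
    i ≠ j ∧ i ≠ k ∧ j ≠ k ∧
    w = lam k i * lam k j * lam i j * (lam k i)⁻¹ * (lam k j)⁻¹ * (lam i j)⁻¹}

/-- The full relator set `R^V(m)` of the virtual pure braid group `VP_m`. -/
def RV (m : ℕ) : Set FG := CR m ∪ LongR m

/-- Value of `S_{i-1}` on a generator, given by the displayed case formulas:
for `k < l`, `S_{i-1}(λ_{k,l})` and `S_{i-1}(λ_{l,k})` according to the position of `i`
relative to `k` and `l`. -/
def Sgen (i : ℕ) (p : ℕ × ℕ) : FG :=
  if p.1 < p.2 then
    -- the generator is `λ_{k,l}` with `k = p.1 < l = p.2`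
    if i < p.1 then lam (p.1 + 1) (p.2 + 1)
    else if i = p.1 then lam p.1 (p.2 + 1) * lam (p.1 + 1) (p.2 + 1)
    else if i < p.2 then lam p.1 (p.2 + 1)
    else if i = p.2 then lam p.1 (p.2 + 1) * lam p.1 p.2
    else lam p.1 p.2
  else if p.2 < p.1 then
    -- the generator is `λ_{l,k}` with `k = p.2 < l = p.1`
    if i < p.2 then lam (p.1 + 1) (p.2 + 1)
    else if i = p.2 then lam (p.1 + 1) (p.2 + 1) * lam (p.1 + 1) p.2
    else if i < p.1 then lam (p.1 + 1) p.2
    else if i = p.1 then lam p.1 p.2 * lam (p.1 + 1) p.2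
    else lam p.1 p.2
  else lam p.1 p.2

/-- The free-group homomorphism `S_t = S_{(t+1)-1} : F_m → F_{m+1}` (doubling the
`(t+1)`-st strand), determined on generators by the displayed case formulas. -/
def Smap (t : ℕ) : FG →* FG := FreeGroup.lift (Sgen (t + 1))

/-- The relator `u * v⁻¹` of a relation `u = v`. -/
def relOf (u v : FG) : FG := u * v⁻¹

/-- The set `R_{i,j,k}` of the six long relators with indices in `{i, j, k}`. -/
def Rtriple (i j k : ℕ) : Set FG :=
  {relOf (lam i j * lam i k * lam j k) (lam j k * lam i k * lam i j),
   relOf (lam j i * lam j k * lam i k) (lam i k * lam j k * lam j i),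
   relOf (lam i k * lam i j * lam k j) (lam k j * lam i j * lam i k),
   relOf (lam k i * lam k j * lam i j) (lam i j * lam k j * lam k i),
   relOf (lam j k * lam j i * lam k i) (lam k i * lam j i * lam j k),
   relOf (lam k j * lam k i * lam j i) (lam j i * lam k i * lam k j)}

/-- The commutator `[a,b] = a⁻¹ b⁻¹ a b`. -/
def commE (a b : FG) : FG := a⁻¹ * b⁻¹ * a * b

/-- The automorphism of the free group induced by a permutation of the indices:
`λ_{i,j} ↦ λ_{σ(i),σ(j)}`. -/
def permF (σ : Equiv.Perm ℕ) : FG →* FG :=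
  FreeGroup.lift (fun p => lam (σ p.1) (σ p.2))

/-- The relator `λ_{3,4} λ_{2,1} λ_{3,4}⁻¹ λ_{2,1}⁻¹` of `F_4`. -/
def r11 : FG := lam 3 4 * lam 2 1 * (lam 3 4)⁻¹ * (lam 2 1)⁻¹

/-- The normal closure in `F_5` of `{S_i(λ_{3,4}λ_{2,1}λ_{3,4}⁻¹λ_{2,1}⁻¹) : i = 0,1,2,3} ∪ CR(4)`. -/
def N11 : Subgroup FG :=
  Subgroup.normalClosure ({Smap 0 r11, Smap 1 r11, Smap 2 r11, Smap 3 r11} ∪ CR 4)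


/-!
In `F₅ ⧸ N11` each lifted relator `S_t ⁅λ₃₄, λ₂₁⁆` says that `S_t λ₃₄` commutes with `S_t λ₂₁`,
and one of these two images is a product of two generators. If one factor is already known to
commute, so does the other. Starting from `λ₃₄ ~ λ₂₁` (a relator of `CR(4)`), `S₃` gives
`λ₃₅ ~ λ₂₁`, then `S₂` gives `λ₄₅ ~ λ₂₁`, `S₁` gives `λ₄₅ ~ λ₃₁` and `S₀` gives `λ₄₅ ~ λ₃₂`.
-/

open scoped commutatorElement

namespace Commute

variable {G : Type*} [Group G] {a b c : G}

theorem of_mul_right_left (habc : Commute a (b * c)) (hac : Commute a c) : Commute a b := by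
  simpa using habc.mul_right hac.inv_right

theorem of_mul_right_right (habc : Commute a (b * c)) (hab : Commute a b) : Commute a c := by
  simpa using hab.inv_right.mul_right habc

end Commute

namespace QuotientGroup

theorem commute_mk_iff_commutatorElement_mem {G : Type*} [Group G] {N : Subgroup G} [N.Normal]
    {a b : G} : Commute (a : G ⧸ N) b ↔ ⁅a, b⁆ ∈ N := by
  rw [← commutatorElement_eq_one_iff_commute, ← eq_one_iff]
  exact Iff.of_eq (congrArg (· = 1) (map_commutatorElement (mk' N) a b).symm)

end QuotientGroup

open QuotientGroup

theorem commE_mem_iff {N : Subgroup FG} [N.Normal] {a b : FG} :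
    commE a b ∈ N ↔ Commute (a : FG ⧸ N) b := by
  have hcomm : commE a b = ⁅a⁻¹, b⁻¹⁆ := by simp [commE, commutatorElement_def]
  rw [hcomm, ← commute_mk_iff_commutatorElement_mem, mk_inv, mk_inv, Commute.inv_inv_iff]

theorem Smap_lam (t i j : ℕ) : Smap t (lam i j) = Sgen (t + 1) (i, j) :=
  FreeGroup.lift_apply_of

instance : N11.Normal := Subgroup.normalClosure_normal

local notation "ℓ[" i ", " j "]" => ((lam i j : FG) : FG ⧸ N11)

theorem commute_lam_34_21_mod_N11 : Commute ℓ[3, 4] ℓ[2, 1] :=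
  commute_mk_iff_commutatorElement_mem.2 <|
    Subgroup.subset_normalClosure <| Or.inr ⟨3, 4, 2, 1, by norm_num [commutatorElement_def]⟩

theorem commute_Smap_mod_N11 {t : ℕ} (ht : t ≤ 3) :
    Commute (Smap t (lam 3 4) : FG ⧸ N11) (Smap t (lam 2 1)) := by
  rw [commute_mk_iff_commutatorElement_mem, ← map_commutatorElement]
  have hr : ⁅lam 3 4, lam 2 1⁆ = r11 := rfl
  exact Subgroup.subset_normalClosure <| Or.inl <| by interval_cases t <;> simp [hr]

theorem comms_from_lifting_34_21 :
    commE (lam 3 5) (lam 2 1) ∈ N11 ∧ commE (lam 4 5) (lam 2 1) ∈ N11 ∧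
    commE (lam 4 5) (lam 3 1) ∈ N11 ∧ commE (lam 4 5) (lam 3 2) ∈ N11 := by
  have hS₃ : Commute (ℓ[3, 5] * ℓ[3, 4]) ℓ[2, 1] := by
    simpa [Smap_lam, Sgen] using commute_Smap_mod_N11 (t := 3) le_rfl
  have hS₂ : Commute (ℓ[3, 5] * ℓ[4, 5]) ℓ[2, 1] := by
    simpa [Smap_lam, Sgen] using commute_Smap_mod_N11 (t := 2) (by norm_num)
  have hS₁ : Commute ℓ[4, 5] (ℓ[2, 1] * ℓ[3, 1]) := by
    simpa [Smap_lam, Sgen] using commute_Smap_mod_N11 (t := 1) (by norm_num)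
  have hS₀ : Commute ℓ[4, 5] (ℓ[3, 2] * ℓ[3, 1]) := by
    simpa [Smap_lam, Sgen] using commute_Smap_mod_N11 (t := 0) (by norm_num)
  have h21_35 := hS₃.symm.of_mul_right_left commute_lam_34_21_mod_N11.symm
  have h21_45 := hS₂.symm.of_mul_right_right h21_35
  have h45_31 := hS₁.of_mul_right_right h21_45.symm
  have h45_32 := hS₀.of_mul_right_left h45_31
  simp only [commE_mem_iff]
  exact ⟨h21_35.symm, h21_45.symm, h45_31, h45_32⟩
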